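/- arXiv:1003.2044 — 2 statements merged into one kernel-verified Lean document; each statement's English description precedes it below -/
import Mathlib

section
/- Let {x, x₁} be a Bertrand D-pair with constant λ ≠ 0, correspondence s and angle function θ. If x is a geodesic (k_g ≡ 0), then for every s₁ the geodesic torsion of x₁ is τ_{g₁}(s₁) = τ_g(s(s₁)) cos θ(s₁) · (cos θ(s₁) − λ τ_g(s(s₁)) sin θ(s₁)) · (s'(s₁))². -/
noncomputable section

abbrev E3 := EuclideanSpace ℝ (Fin 3)

/-- Cross product on `EuclideanSpace ℝ (Fin 3)`. -/
def cross3 (a b : E3) : E3 :=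
  WithLp.toLp 2 ![a 1 * b 2 - a 2 * b 1, a 2 * b 0 - a 0 * b 2, a 0 * b 1 - a 1 * b 0]

/-- Darboux frame vector `g = n × T`, where `T = x'`. -/
def gvec (x n : ℝ → E3) : ℝ → E3 := fun t => cross3 (n t) (deriv x t)

/-- Geodesic curvature `k_g = ⟪T', g⟫`. -/
def geodCurv (x n : ℝ → E3) : ℝ → ℝ := fun t => (inner ℝ (deriv (deriv x) t) (gvec x n t) : ℝ)

/-- Normal curvature `k_n = ⟪T', n⟫`. -/
def normCurv (x n : ℝ → E3) : ℝ → ℝ := fun t => (inner ℝ (deriv (deriv x) t) (n t) : ℝ)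

/-- Geodesic torsion `τ_g = ⟪g', n⟫`. -/
def geodTors (x n : ℝ → E3) : ℝ → ℝ := fun t => (inner ℝ (deriv (gvec x n) t) (n t) : ℝ)

/-- A unit-speed smooth curve `x` on an oriented surface, encoded by a smooth unit
normal field `n` along `x` orthogonal to the tangent. -/
def IsDarbouxCurve (x n : ℝ → E3) : Prop :=
  ContDiff ℝ (⊤ : ℕ∞) x ∧ ContDiff ℝ (⊤ : ℕ∞) n ∧ (∀ t, ‖deriv x t‖ = 1) ∧ (∀ t, ‖n t‖ = 1) ∧
    ∀ t, (inner ℝ (n t) (deriv x t) : ℝ) = 0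

/-- `{x, x₁}` is a Bertrand D-pair with constant `lam ≠ 0`, smooth increasing
correspondence `s` and smooth angle function `θ`. -/
def IsBertrandDPair (x n x₁ n₁ : ℝ → E3) (lam : ℝ) (s θ : ℝ → ℝ) : Prop :=
  IsDarbouxCurve x n ∧ IsDarbouxCurve x₁ n₁ ∧ lam ≠ 0 ∧
    ContDiff ℝ (⊤ : ℕ∞) s ∧ (∀ t, 0 < deriv s t) ∧
    (∀ t, x (s t) = x₁ t + lam • gvec x₁ n₁ t) ∧
    (∀ t, gvec x n (s t) = gvec x₁ n₁ t) ∧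
    ContDiff ℝ (⊤ : ℕ∞) θ ∧
    (∀ t, deriv x (s t) = Real.cos (θ t) • deriv x₁ t - Real.sin (θ t) • n₁ t) ∧
    (∀ t, n (s t) = Real.sin (θ t) • deriv x₁ t + Real.cos (θ t) • n₁ t)

lemma inner3 (a b : E3) : (inner ℝ a b : ℝ) = a 0 * b 0 + a 1 * b 1 + a 2 * b 2 := by
  simp [PiLp.inner_apply, Fin.sum_univ_three, RCLike.inner_apply]
  ring

lemma cross3_inner_right (a b : E3) : (inner ℝ (cross3 a b) b : ℝ) = 0 := by
  rw [inner3]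
  show (a 1 * b 2 - a 2 * b 1) * b 0 + (a 2 * b 0 - a 0 * b 2) * b 1 +
    (a 0 * b 1 - a 1 * b 0) * b 2 = 0
  ring

lemma contDiff_cross3' {f h : ℝ → E3} (hf : ContDiff ℝ (⊤ : ℕ∞) f)
    (hh : ContDiff ℝ (⊤ : ℕ∞) h) :
    ContDiff ℝ (⊤ : ℕ∞) (fun t => cross3 (f t) (h t)) := by
  have comp : ∀ (u : ℝ → E3), ContDiff ℝ (⊤ : ℕ∞) u → ∀ i, ContDiff ℝ (⊤ : ℕ∞) (fun t => u t i) := by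
    intro u hu i
    exact (EuclideanSpace.proj i).contDiff.comp hu
  rw [contDiff_euclidean]
  intro i
  fin_cases i
  · show ContDiff ℝ (⊤ : ℕ∞) (fun t => f t 1 * h t 2 - f t 2 * h t 1)
    exact ((comp f hf 1).mul (comp h hh 2)).sub ((comp f hf 2).mul (comp h hh 1))
  · show ContDiff ℝ (⊤ : ℕ∞) (fun t => f t 2 * h t 0 - f t 0 * h t 2)
    exact ((comp f hf 2).mul (comp h hh 0)).sub ((comp f hf 0).mul (comp h hh 2))
  · show ContDiff ℝ (⊤ : ℕ∞) (fun t => f t 0 * h t 1 - f t 1 * h t 0)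
    exact ((comp f hf 0).mul (comp h hh 1)).sub ((comp f hf 1).mul (comp h hh 0))

theorem bertrand_D_stmt_17
    (x n x₁ n₁ : ℝ → E3) (lam : ℝ) (s θ : ℝ → ℝ)
    (hpair : IsBertrandDPair x n x₁ n₁ lam s θ)
    (hgeo : ∀ t, geodCurv x n t = 0) :
    ∀ t, geodTors x₁ n₁ t =
      geodTors x n (s t) * Real.cos (θ t) * (Real.cos (θ t) - lam * geodTors x n (s t) * Real.sin (θ t)) *
        (deriv s t) ^ 2 := by
  obtain ⟨⟨hxcd, hncd, hxu, hnu, hxo⟩, ⟨hx1cd, hn1cd, hx1u, hn1u, hx1o⟩, hlam,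
    hscd, hspos, hX, hG, hθcd, hT, hN⟩ := hpair
  intro t
  have hxcd' : ContDiff ℝ (⊤ : ℕ∞) x := hxcd.of_le (by simp)
  have hx1cd' : ContDiff ℝ (⊤ : ℕ∞) x₁ := hx1cd.of_le (by simp)
  have hTcd : ContDiff ℝ (⊤ : ℕ∞) (deriv x) := (contDiff_infty_iff_deriv.mp hxcd').2
  have hgcd : ContDiff ℝ (⊤ : ℕ∞) (gvec x n) :=
    contDiff_cross3' (hncd.of_le (by simp)) hTcd
  have hT1cd : ContDiff ℝ (⊤ : ℕ∞) (deriv x₁) := (contDiff_infty_iff_deriv.mp hx1cd').2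
  have dg : ∀ u, HasDerivAt (gvec x n) (deriv (gvec x n) u) u :=
    fun u => (hgcd.differentiable (by simp) u).hasDerivAt
  have dT : ∀ u, HasDerivAt (deriv x) (deriv (deriv x) u) u :=
    fun u => (hTcd.differentiable (by simp) u).hasDerivAt
  have ds : HasDerivAt s (deriv s t) t := ((hscd.of_le le_rfl).differentiable (by simp) t).hasDerivAt
  set σ := deriv s t with hσdef
  set c := Real.cos (θ t) with hcdef
  set S := Real.sin (θ t) with hSdef
  set u := s t with hudef
  set D := deriv (gvec x n) u with hDdef
  set T1 := deriv x₁ t with hT1def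
  set N1 := n₁ t with hN1def
  set Tu := deriv x u with hTudef
  set Nu := n u with hNudef
  -- ⟪D, Tu⟫ = 0
  have key : (inner ℝ D Tu : ℝ) = 0 := by
    have h1 : HasDerivAt (fun v => (inner ℝ (gvec x n v) (deriv x v) : ℝ))
        ((inner ℝ (gvec x n u) (deriv (deriv x) u) : ℝ) + inner ℝ D (deriv x u)) u :=
      HasDerivAt.inner ℝ (dg u) (dT u)
    have h2 : (fun v => (inner ℝ (gvec x n v) (deriv x v) : ℝ)) = fun _ => (0:ℝ) :=
      funext fun v => cross3_inner_right _ _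
    rw [h2] at h1
    have h3 := h1.unique (hasDerivAt_const u 0)
    have h4 : (inner ℝ (gvec x n u) (deriv (deriv x) u) : ℝ) = geodCurv x n u := by
      rw [geodCurv, real_inner_comm]
    rw [h4, hgeo u, zero_add] at h3
    exact h3
  -- chain rule for g
  have hgchain : HasDerivAt (gvec x₁ n₁) (σ • D) t := by
    have h := (dg u).scomp_of_eq t ds hudef
    have hfun : gvec x n ∘ s = gvec x₁ n₁ := funext hG
    rwa [hfun] at h
  -- chain rule for x and the Bertrand relation
  have veq : σ • Tu = T1 + lam • (σ • D) := by
    have hx' : HasDerivAt x (deriv x u) u := (hxcd.differentiable (by simp) u).hasDerivAt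
    have h1 : HasDerivAt (x ∘ s) (σ • Tu) t := hx'.scomp_of_eq t ds hudef
    have hfun : x ∘ s = fun v => x₁ v + lam • gvec x₁ n₁ v := funext hX
    rw [hfun] at h1
    have h2 : HasDerivAt (fun v => x₁ v + lam • gvec x₁ n₁ v) (T1 + lam • (σ • D)) t :=
      ((hx1cd.differentiable (by simp) t).hasDerivAt).add (hgchain.const_smul lam)
    exact h1.unique h2
  -- basic inner product facts
  have hT1T1 : (inner ℝ T1 T1 : ℝ) = 1 := by
    rw [real_inner_self_eq_norm_mul_norm, hx1u t]; norm_num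
  have hT1N1 : (inner ℝ T1 N1 : ℝ) = 0 := by
    rw [real_inner_comm]; exact hx1o t
  have hTuNu : (inner ℝ Tu Nu : ℝ) = 0 := by
    rw [real_inner_comm]; exact hxo u
  have hTuTu : (inner ℝ Tu Tu : ℝ) = 1 := by
    rw [real_inner_self_eq_norm_mul_norm, hxu u]; norm_num
  have hTe : Tu = c • T1 - S • N1 := hT t
  have hNe : Nu = S • T1 + c • N1 := hN t
  set τ := geodTors x n u with hτdef
  have hτ : (inner ℝ D Nu : ℝ) = τ := rfl
  set A := (inner ℝ D T1 : ℝ) with hAdef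
  set B := (inner ℝ D N1 : ℝ) with hBdef
  have e1 : c * A - S * B = 0 := by
    have : (inner ℝ D Tu : ℝ) = c * A - S * B := by
      rw [hTe, inner_sub_right, real_inner_smul_right, real_inner_smul_right]
    rw [← this]; exact key
  have e2 : S * A + c * B = τ := by
    have : (inner ℝ D Nu : ℝ) = S * A + c * B := by
      rw [hNe, inner_add_right, real_inner_smul_right, real_inner_smul_right]
    rw [← this]; exact hτ
  have hpy : S ^ 2 + c ^ 2 = 1 := Real.sin_sq_add_cos_sq (θ t)
  have hB : B = c * τ := by linear_combination c * e2 - S * e1 - B * hpy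
  -- scalar consequences of veq
  have eqn1 : S + lam * σ * τ = 0 := by
    have h1 : (inner ℝ (σ • Tu) Nu : ℝ) = 0 := by
      rw [real_inner_smul_left, hTuNu, mul_zero]
    have h2 : (inner ℝ (T1 + lam • (σ • D)) Nu : ℝ) = S + lam * σ * τ := by
      rw [inner_add_left, real_inner_smul_left, real_inner_smul_left, hτ]
      have : (inner ℝ T1 Nu : ℝ) = S := by
        rw [hNe, inner_add_right, real_inner_smul_right, real_inner_smul_right,
          hT1T1, hT1N1]
        ring
      rw [this]; ring
    rw [veq, h2] at h1
    exact h1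
  have eqn2 : σ = c := by
    have h1 : (inner ℝ (σ • Tu) Tu : ℝ) = σ := by
      rw [real_inner_smul_left, hTuTu, mul_one]
    have h2 : (inner ℝ (T1 + lam • (σ • D)) Tu : ℝ) = c := by
      rw [inner_add_left, real_inner_smul_left, real_inner_smul_left, key]
      have : (inner ℝ T1 Tu : ℝ) = c := by
        rw [hTe, inner_sub_right, real_inner_smul_right, real_inner_smul_right,
          real_inner_comm T1 T1, hT1T1, hT1N1]
        ring
      rw [this]; ring
    rw [veq, h2] at h1
    linarith
  -- τ_{g₁}
  have hτg1 : geodTors x₁ n₁ t = σ * B := by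
    rw [geodTors, hgchain.deriv, real_inner_smul_left, hBdef]
  rw [eqn2] at eqn1
  rw [hτg1, hB, eqn2]
  linear_combination τ * S * c ^ 2 * eqn1 - τ * c ^ 2 * hpy
end
end

section
/- Let {x, x₁} be a Bertrand D-pair with constant λ ≠ 0, correspondence s and angle function θ. If x is a geodesic (k_g ≡ 0), then for every s₁ the geodesic torsion of x₁ satisfies τ_{g₁}(s₁) = τ_g(s(s₁)) · (1 − λ k_{g₁}(s₁)) · [(1 − λ k_{g₁}(s₁)) + λ² τ_g(s(s₁)) τ_{g₁}(s₁)]. -/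
noncomputable section

open scoped RealInnerProductSpace

lemma inner_cross3_right (a b : E3) : ⟪cross3 a b, b⟫ = 0 := by
  simp [cross3, PiLp.inner_apply, Fin.sum_univ_three, RCLike.inner_apply]
  ring

lemma inner_cross3_left (a b : E3) : ⟪cross3 a b, a⟫ = 0 := by
  simp [cross3, PiLp.inner_apply, Fin.sum_univ_three, RCLike.inner_apply]
  ring

lemma contDiff_cross3_comp {f g : ℝ → E3} (hf : ContDiff ℝ (⊤ : ℕ∞) f) (hg : ContDiff ℝ (⊤ : ℕ∞) g) :
    ContDiff ℝ (⊤ : ℕ∞) (fun t => cross3 (f t) (g t)) := by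
  have hfi : ∀ i, ContDiff ℝ (⊤ : ℕ∞) (fun t => f t i) := contDiff_euclidean.mp hf
  have hgi : ∀ i, ContDiff ℝ (⊤ : ℕ∞) (fun t => g t i) := contDiff_euclidean.mp hg
  rw [contDiff_euclidean]
  intro i
  fin_cases i <;>
    simp only [cross3, Matrix.cons_val_zero, Matrix.cons_val_one, Matrix.head_cons,
      Matrix.cons_val_two, Matrix.tail_cons] <;>
    exact ((hfi _).mul (hgi _)).sub ((hfi _).mul (hgi _))

lemma contDiff_gvec {y m : ℝ → E3} (hy : ContDiff ℝ (⊤ : ℕ∞) y) (hm : ContDiff ℝ (⊤ : ℕ∞) m) :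
    ContDiff ℝ (⊤ : ℕ∞) (gvec y m) :=
  contDiff_cross3_comp hm (contDiff_infty_iff_deriv.mp hy).2

/-- `⟪g', T⟫ = -k_g` for a Darboux curve. -/
lemma inner_deriv_gvec_tangent {y m : ℝ → E3} (hy : ContDiff ℝ (⊤ : ℕ∞) y) (hm : ContDiff ℝ (⊤ : ℕ∞) m)
    (t : ℝ) : ⟪deriv (gvec y m) t, deriv y t⟫ = - geodCurv y m t := by
  have hT : ContDiff ℝ (⊤ : ℕ∞) (deriv y) := (contDiff_infty_iff_deriv.mp hy).2
  have hg : ContDiff ℝ (⊤ : ℕ∞) (gvec y m) := contDiff_gvec hy hm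
  have h1 : HasDerivAt (fun u => (⟪gvec y m u, deriv y u⟫ : ℝ))
      (⟪gvec y m t, deriv (deriv y) t⟫ + ⟪deriv (gvec y m) t, deriv y t⟫) t :=
    HasDerivAt.inner ℝ ((hg.differentiable (by simp) t).hasDerivAt)
      ((hT.differentiable (by simp) t).hasDerivAt)
  have h0 : (fun u => (⟪gvec y m u, deriv y u⟫ : ℝ)) = fun _ => (0 : ℝ) := by
    funext u; exact inner_cross3_right (m u) (deriv y u)
  rw [h0] at h1
  have h2 := h1.unique (hasDerivAt_const t 0)
  have h3 : ⟪gvec y m t, deriv (deriv y) t⟫ = geodCurv y m t :=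
    real_inner_comm _ _
  simp only [geodCurv] at h3 ⊢
  linarith

set_option maxHeartbeats 2000000 in
theorem bertrand_D_stmt_19
    (x n x₁ n₁ : ℝ → E3) (lam : ℝ) (s θ : ℝ → ℝ)
    (hpair : IsBertrandDPair x n x₁ n₁ lam s θ)
    (hgeo : ∀ t, geodCurv x n t = 0) :
    ∀ t, geodTors x₁ n₁ t =
      geodTors x n (s t) * (1 - lam * geodCurv x₁ n₁ t) * ((1 - lam * geodCurv x₁ n₁ t) + lam ^ 2 * geodTors x n (s t) * geodTors x₁ n₁ t) := by
  obtain ⟨⟨hxC, hnC, hxu, hnu, hno⟩, ⟨hx₁C, hn₁C, hx₁u, hn₁u, hn₁o⟩, hlam, hsC, hs',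
    hxx, hgg, hθC, hT, hn⟩ := hpair
  intro t
  -- smoothness facts (downgrade ω to ∞)
  replace hxC : ContDiff ℝ (⊤ : ℕ∞) x := hxC.of_le (by simp)
  replace hnC : ContDiff ℝ (⊤ : ℕ∞) n := hnC.of_le (by simp)
  replace hx₁C : ContDiff ℝ (⊤ : ℕ∞) x₁ := hx₁C.of_le (by simp)
  replace hn₁C : ContDiff ℝ (⊤ : ℕ∞) n₁ := hn₁C.of_le (by simp)
  replace hsC : ContDiff ℝ (⊤ : ℕ∞) s := hsC.of_le (by simp)
  have hTC : ContDiff ℝ (⊤ : ℕ∞) (deriv x) := (contDiff_infty_iff_deriv.mp hxC).2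
  have hT₁C : ContDiff ℝ (⊤ : ℕ∞) (deriv x₁) := (contDiff_infty_iff_deriv.mp hx₁C).2
  have hgC : ContDiff ℝ (⊤ : ℕ∞) (gvec x n) := contDiff_gvec hxC hnC
  have hg₁C : ContDiff ℝ (⊤ : ℕ∞) (gvec x₁ n₁) := contDiff_gvec hx₁C hn₁C
  have hsD : HasDerivAt s (deriv s t) t := ((hsC.differentiable (by simp)) t).hasDerivAt
  -- abbreviations
  set a := deriv s t with ha
  set c := Real.cos (θ t) with hc
  set si := Real.sin (θ t) with hsi
  set τ := geodTors x n (s t) with hτ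
  set τ₁ := geodTors x₁ n₁ t with hτ₁
  set k₁ := geodCurv x₁ n₁ t with hk₁
  -- orthonormality scalars
  have hTT : (⟪deriv x₁ t, deriv x₁ t⟫ : ℝ) = 1 := by
    rw [real_inner_self_eq_norm_sq, hx₁u t]; norm_num
  have hNN : (⟪n₁ t, n₁ t⟫ : ℝ) = 1 := by
    rw [real_inner_self_eq_norm_sq, hn₁u t]; norm_num
  have hNT : (⟪n₁ t, deriv x₁ t⟫ : ℝ) = 0 := hn₁o t
  have hTN : (⟪deriv x₁ t, n₁ t⟫ : ℝ) = 0 := by rw [real_inner_comm]; exact hNT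
  -- V1 : a • T(s t) = T₁ + lam • g₁'
  have hcomp1 : HasDerivAt (fun u => x (s u)) (a • deriv x (s t)) t := by
    exact HasDerivAt.scomp t ((hxC.differentiable (by simp) (s t)).hasDerivAt) hsD
  have hfun1 : (fun u => x (s u)) = fun u => x₁ u + lam • gvec x₁ n₁ u := funext hxx
  rw [hfun1] at hcomp1
  have hRHS1 : HasDerivAt (fun u => x₁ u + lam • gvec x₁ n₁ u)
      (deriv x₁ t + lam • deriv (gvec x₁ n₁) t) t :=
    ((hx₁C.differentiable (by simp) t).hasDerivAt).add
      (((hg₁C.differentiable (by simp) t).hasDerivAt).const_smul lam)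
  have V1 : a • deriv x (s t) = deriv x₁ t + lam • deriv (gvec x₁ n₁) t :=
    hcomp1.unique hRHS1
  -- V2 : a • g'(s t) = g₁'
  have hcomp2 : HasDerivAt (fun u => gvec x n (s u)) (a • deriv (gvec x n) (s t)) t := by
    exact HasDerivAt.scomp t ((hgC.differentiable (by simp) (s t)).hasDerivAt) hsD
  have hfun2 : (fun u => gvec x n (s u)) = fun u => gvec x₁ n₁ u := funext hgg
  rw [hfun2] at hcomp2
  have V2 : a • deriv (gvec x n) (s t) = deriv (gvec x₁ n₁) t :=
    hcomp2.unique ((hg₁C.differentiable (by simp) t).hasDerivAt)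
  -- key inner products with derivative of g₁
  have hg₁T : (⟪deriv (gvec x₁ n₁) t, deriv x₁ t⟫ : ℝ) = -k₁ :=
    inner_deriv_gvec_tangent hx₁C hn₁C t
  have hg₁N : (⟪deriv (gvec x₁ n₁) t, n₁ t⟫ : ℝ) = τ₁ := rfl
  -- key inner products with derivative of g at s t
  have hgT : (⟪deriv (gvec x n) (s t), deriv x (s t)⟫ : ℝ) = 0 := by
    rw [inner_deriv_gvec_tangent hxC hnC (s t), hgeo (s t)]; ring
  have hgN : (⟪deriv (gvec x n) (s t), n (s t)⟫ : ℝ) = τ := rfl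
  -- scalar equations
  have h1 : a * c = 1 - lam * k₁ := by
    have := congrArg (fun v : E3 => (⟪v, deriv x₁ t⟫ : ℝ)) V1
    simp only [hT t, inner_add_left, inner_sub_left, real_inner_smul_left,
      hTT, hNT, hg₁T] at this
    linarith
  have h2 : a * si = -(lam * τ₁) := by
    have := congrArg (fun v : E3 => (⟪v, n₁ t⟫ : ℝ)) V1
    simp only [hT t, inner_add_left, inner_sub_left, real_inner_smul_left,
      hNN, hTN, hg₁N] at this
    linarith
  -- expansion of T₁ and n₁ in the frame at s t
  have hV3 : deriv x₁ t = c • deriv x (s t) + si • n (s t) := by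
    rw [hT t, hn t]
    have hpy : c ^ 2 + si ^ 2 = 1 := by
      rw [hc, hsi]; exact Real.cos_sq_add_sin_sq (θ t)
    match_scalars <;> nlinarith [hpy]
  have hV4 : n₁ t = (-si) • deriv x (s t) + c • n (s t) := by
    rw [hT t, hn t]
    have hpy : c ^ 2 + si ^ 2 = 1 := by
      rw [hc, hsi]; exact Real.cos_sq_add_sin_sq (θ t)
    match_scalars <;> nlinarith [hpy]
  have h3 : a * (si * τ) = -k₁ := by
    have h' : (⟪a • deriv (gvec x n) (s t), deriv x₁ t⟫ : ℝ) = -k₁ := by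
      rw [V2]; exact hg₁T
    simp only [hV3, inner_add_right, real_inner_smul_left, real_inner_smul_right,
      hgT, hgN] at h'
    linarith
  have h4 : a * (c * τ) = τ₁ := by
    have h' : (⟪a • deriv (gvec x n) (s t), n₁ t⟫ : ℝ) = τ₁ := by
      rw [V2]; exact hg₁N
    simp only [hV4, inner_add_right, real_inner_smul_left, real_inner_smul_right,
      hgT, hgN] at h'
    linarith
  -- final algebra
  have key : lam ^ 2 * τ * τ₁ = lam * k₁ := by linear_combination lam * τ * h2 - lam * h3
  linear_combination τ * h1 - h4 - τ * (1 - lam * k₁) * key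
end
end
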